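/- arXiv:1206.1381 — 2 statements merged into one kernel-verified Lean document; each statement's English description precedes it below -/
import Mathlib

section
/- For every integer m ≥ 2 one has q_m(φ₋^{(m−1)}(5)) < 0 and q_m(φ₋^{(m−1)}(2)) > 0. Moreover q_{m+1}(φ₋^{(m)}(5)) ≤ 10·q_m(φ₋^{(m−1)}(5)) for every m ≥ 2. -/
open Function

noncomputable section

/-- The polynomial map `f(x) = x(5-x)`. -/
def f (x : ℝ) : ℝ := x * (5 - x)

/-- `l(x) = x - 6`. -/
def lf (x : ℝ) : ℝ := x - 6

/-- `s(x) = (2-x)(4-x)(5-x) - (14-3x)`. -/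
def sf (x : ℝ) : ℝ := (2 - x) * (4 - x) * (5 - x) - (14 - 3 * x)

/-- `r(x) = -2(2-x)(5-x)`. -/
def rf (x : ℝ) : ℝ := -2 * (2 - x) * (5 - x)

/-- The decreasing inverse branch of `f`. -/
def phim (x : ℝ) : ℝ := (5 - Real.sqrt (25 - 4 * x)) / 2

/-- The increasing inverse branch of `f`. -/
def phip (x : ℝ) : ℝ := (5 + Real.sqrt (25 - 4 * x)) / 2

/-- `q m` is the function `q_m` from the paper, meaningful for `m ≥ 2`
(the values at `m = 0, 1` are junk values `1`, never used in the statements). -/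
def q : ℕ → ℝ → ℝ
  | 0, _ => 1
  | 1, _ => 1
  | 2, x => sf x
  | 3, x => sf (f x) * sf x - rf (f x) * lf x
  | m + 4, x =>
      sf (f^[m + 2] x) * q (m + 3) x - rf (f^[m + 2] x) * lf (f^[m + 1] x) * q (m + 2) x

/-! ### Auxiliary lemmas -/

lemma phim_pos {x : ℝ} (h0 : 0 < x) (h1 : x ≤ 25/4) : 0 < phim x := by
  have hs := Real.sq_sqrt (show (0:ℝ) ≤ 25 - 4*x by linarith)
  have hn := Real.sqrt_nonneg (25 - 4*x)
  unfold phim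
  nlinarith [hs, hn]

lemma phim_half (x : ℝ) : phim x ≤ 5/2 := by
  have hn := Real.sqrt_nonneg (25 - 4*x)
  unfold phim; linarith

lemma phim_ub {x b : ℝ} (hx : x ≤ 25/4) (hfb : x ≤ b*(5-b)) : phim x ≤ b := by
  have hs := Real.sq_sqrt (show (0:ℝ) ≤ 25 - 4*x by linarith)
  have hn := Real.sqrt_nonneg (25 - 4*x)
  unfold phim
  nlinarith [hs, hn, sq_nonneg (Real.sqrt (25-4*x) - (5 - 2*b))]

lemma phim_lb {x b : ℝ} (hx : x ≤ 25/4) (hb : b ≤ 5/2) (hfb : b*(5-b) ≤ x) : b ≤ phim x := by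
  have hs := Real.sq_sqrt (show (0:ℝ) ≤ 25 - 4*x by linarith)
  have hn := Real.sqrt_nonneg (25 - 4*x)
  unfold phim
  nlinarith [hs, hn, sq_nonneg (Real.sqrt (25-4*x) - (5 - 2*b))]

lemma f_phim {x : ℝ} (hx : x ≤ 25/4) : f (phim x) = x := by
  have hs := Real.sq_sqrt (show (0:ℝ) ≤ 25 - 4*x by linarith)
  unfold f phim
  nlinarith [hs]

lemma iter_bounds {c : ℝ} (h0 : 0 < c) (h1 : c ≤ 25/4) :
    ∀ k, 0 < phim^[k] c ∧ phim^[k] c ≤ 25/4 := by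
  intro k
  induction k with
  | zero => exact ⟨h0, h1⟩
  | succ n ih =>
    rw [Function.iterate_succ_apply']
    exact ⟨phim_pos ih.1 ih.2, le_trans (phim_half _) (by norm_num)⟩

lemma f_iter {c : ℝ} (h0 : 0 < c) (h1 : c ≤ 25/4) (k : ℕ) :
    f (phim^[k+1] c) = phim^[k] c := by
  rw [Function.iterate_succ_apply']
  exact f_phim (iter_bounds h0 h1 k).2

lemma iter_le_of {c b : ℝ} (h0 : 0 < c) (h1 : c ≤ 25/4) (hb : b ≤ 5/2)
    {k0 : ℕ} (hk : phim^[k0] c ≤ b) : ∀ j, phim^[k0+j] c ≤ b := by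
  intro j
  induction j with
  | zero => exact hk
  | succ n ih =>
    rw [show k0 + (n+1) = (k0+n)+1 by ring, Function.iterate_succ_apply']
    have hp := (iter_bounds h0 h1 (k0+n)).1
    exact phim_ub (by linarith [(iter_bounds h0 h1 (k0+n)).2]) (by nlinarith)

lemma q_rec : ∀ (m : ℕ) (x : ℝ), q (m+3) x =
    sf (f^[m+1] x) * q (m+2) x - rf (f^[m+1] x) * lf (f^[m] x) * q (m+1) x := by
  intro m x
  match m with
  | 0 => simp [q, Function.iterate_one]
  | n + 1 => rfl

lemma q_bot : ∀ (m : ℕ) (x : ℝ), q (m+3) x =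
    sf x * q (m+2) (f x) - lf x * rf (f x) * q (m+1) (f (f x)) := by
  intro m
  induction m using Nat.strong_induction_on with
  | _ m ih =>
    match m with
    | 0 => intro x; simp [q, Function.iterate_one]; ring
    | 1 =>
      intro x
      simp only [q, Function.iterate_succ_apply, Function.iterate_one, Function.iterate_zero,
        id_eq]
      ring
    | n + 2 =>
      intro x
      rw [q_rec (n+2) x, ih (n+1) (by omega) x, ih n (by omega) x]
      have e1 : f^[n+3] x = f^[n+2] (f x) := by rw [Function.iterate_succ_apply]
      have e2 : f^[n+3] x = f^[n+1] (f (f x)) := by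
        rw [Function.iterate_succ_apply, Function.iterate_succ_apply]
      have e3 : f^[n+2] x = f^[n+1] (f x) := by rw [Function.iterate_succ_apply]
      have e4 : f^[n+2] x = f^[n] (f (f x)) := by
        rw [Function.iterate_succ_apply, Function.iterate_succ_apply]
      have r1 := q_rec (n+1) (f x)
      have r2 := q_rec n (f (f x))
      rw [← e1, ← e3] at r1
      rw [← e2, ← e4] at r2
      rw [r1, r2]
      ring

/-- the key recursion for `q` along backward orbits of `phim`. -/
lemma q_orbit {c : ℝ} (h0 : 0 < c) (h1 : c ≤ 25/4) (k : ℕ) :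
    q (k+4) (phim^[k+3] c) =
      sf (phim^[k+3] c) * q (k+3) (phim^[k+2] c)
        - lf (phim^[k+3] c) * rf (phim^[k+2] c) * q (k+2) (phim^[k+1] c) := by
  have e2 : f (phim^[k+3] c) = phim^[k+2] c := by
    have := f_iter h0 h1 (k+2); rwa [show k+2+1 = k+3 by omega] at this
  have e1 : f (phim^[k+2] c) = phim^[k+1] c := by
    have := f_iter h0 h1 (k+1); rwa [show k+1+1 = k+2 by omega] at this
  have h := q_bot (k+1) (phim^[k+3] c)
  rw [e2, e1] at h
  simp only [show k+1+3 = k+4 by omega, show k+1+2 = k+3 by omega,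
    show k+1+1 = k+2 by omega] at h
  exact h

/-! ### Numeric bounds -/

lemma sf_lb {u : ℝ} (h0 : 0 < u) (h1 : u ≤ 1/10) : 45/2 ≤ sf u := by
  unfold sf; nlinarith [sq_nonneg u, mul_pos h0 h0]

lemma L_pos {u v : ℝ} (hu0 : 0 < u) (hu : u ≤ 1/10) (hv0 : 0 < v) (hv : v ≤ 1) :
    0 < lf u * rf v := by
  have e : lf u * rf v = 2*(6-u)*((2-v)*(5-v)) := by unfold lf rf; ring
  rw [e]
  have : 0 < (2-v)*(5-v) := by nlinarith
  nlinarith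

lemma L_ub {u v : ℝ} (hu0 : 0 < u) (hu : u ≤ 1/10) (hv0 : 0 < v) (hv : v ≤ 1) :
    lf u * rf v ≤ 120 := by
  have e : lf u * rf v = 2*(6-u)*((2-v)*(5-v)) := by unfold lf rf; ring
  rw [e]
  nlinarith [sq_nonneg v, mul_pos hv0 hv0]

lemma step_neg {u v P1 P2 : ℝ} (hu0 : 0 < u) (hu : u ≤ 1/10) (hv0 : 0 < v) (hv : v ≤ 1)
    (hP1 : P1 < 0) (hP2 : P2 ≤ 10*P1) :
    sf u * P2 - lf u * rf v * P1 ≤ 10 * P2 := by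
  have hs := sf_lb hu0 hu
  have hL0 := L_pos hu0 hu hv0 hv
  have hL1 := L_ub hu0 hu hv0 hv
  nlinarith [mul_nonneg (by linarith : (0:ℝ) ≤ sf u - 45/2) (by linarith : (0:ℝ) ≤ -P2),
    mul_nonneg (by linarith : (0:ℝ) ≤ 125 - lf u * rf v) (by linarith : (0:ℝ) ≤ -P1)]

lemma step_pos {u v T1 T2 : ℝ} (hu0 : 0 < u) (hu : u ≤ 1/10) (hv0 : 0 < v) (hv : v ≤ 1)
    (hT1 : 0 < T1) (hT2 : 10*T1 ≤ T2) :
    10 * T2 ≤ sf u * T2 - lf u * rf v * T1 := by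
  have hs := sf_lb hu0 hu
  have hL0 := L_pos hu0 hu hv0 hv
  have hL1 := L_ub hu0 hu hv0 hv
  nlinarith [mul_nonneg (by linarith : (0:ℝ) ≤ sf u - 45/2) (by linarith : (0:ℝ) ≤ T2),
    mul_nonneg (by linarith : (0:ℝ) ≤ 125 - lf u * rf v) (by linarith : (0:ℝ) ≤ T1)]

lemma sf_phim5 : sf ((5 - Real.sqrt 5)/2) = -4 := by
  have hs : Real.sqrt 5 * Real.sqrt 5 = 5 := Real.mul_self_sqrt (by norm_num)
  unfold sf
  linear_combination ((Real.sqrt 5 + 7)/8) * hs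

/-! ### bounds on the orbit of 5 -/

lemma u1_bounds : 1 ≤ phim (5:ℝ) ∧ phim (5:ℝ) ≤ 7/5 :=
  ⟨phim_lb (by norm_num) (by norm_num) (by norm_num),
   phim_ub (by norm_num) (by norm_num)⟩

lemma u2_bounds : 0 < phim^[2] (5:ℝ) ∧ phim^[2] (5:ℝ) ≤ 3/10 := by
  have h1 := u1_bounds
  have e : phim^[2] (5:ℝ) = phim (phim 5) := by
    rw [Function.iterate_succ_apply, Function.iterate_one]
  constructor
  · rw [e]; exact phim_pos (by linarith [h1.1]) (by linarith [h1.2])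
  · rw [e]; exact phim_ub (by linarith [h1.2]) (by nlinarith [h1.2])

lemma u3_le : phim^[3] (5:ℝ) ≤ 1/10 := by
  have h2 := u2_bounds
  have e : phim^[3] (5:ℝ) = phim (phim^[2] 5) := by
    rw [Function.iterate_succ_apply']
  rw [e]
  exact phim_ub (by linarith [h2.2]) (by nlinarith [h2.1, h2.2])

lemma u_small : ∀ k, phim^[k+3] (5:ℝ) ≤ 1/10 := by
  intro k
  have := iter_le_of (c := 5) (by norm_num) (by norm_num) (by norm_num) (k0 := 3) u3_le k
  rwa [Nat.add_comm 3 k] at this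

lemma u_le_one : ∀ k, phim^[k+2] (5:ℝ) ≤ 1 := by
  intro k
  have := iter_le_of (c := 5) (by norm_num) (by norm_num) (by norm_num : (3:ℝ)/10 ≤ 5/2)
    (k0 := 2) u2_bounds.2 k
  rw [Nat.add_comm 2 k] at this
  linarith

/-! ### bounds on the orbit of 2 -/

lemma v1_bounds : 43/100 ≤ phim (2:ℝ) ∧ phim (2:ℝ) ≤ 9/20 :=
  ⟨phim_lb (by norm_num) (by norm_num) (by norm_num),
   phim_ub (by norm_num) (by norm_num)⟩

lemma v2_bounds : 0 < phim^[2] (2:ℝ) ∧ phim^[2] (2:ℝ) ≤ 1/10 := by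
  have h1 := v1_bounds
  have e : phim^[2] (2:ℝ) = phim (phim 2) := by
    rw [Function.iterate_succ_apply, Function.iterate_one]
  constructor
  · rw [e]; exact phim_pos (by linarith [h1.1]) (by linarith [h1.2])
  · rw [e]; exact phim_ub (by linarith [h1.2]) (by nlinarith [h1.1, h1.2])

lemma v_small : ∀ k, phim^[k+2] (2:ℝ) ≤ 1/10 := by
  intro k
  have := iter_le_of (c := 2) (by norm_num) (by norm_num) (by norm_num) (k0 := 2) v2_bounds.2 k
  rwa [Nat.add_comm 2 k] at this

/-! ### the main inductions -/

lemma main5 : ∀ k : ℕ, q (k+2) (phim^[k+1] 5) < 0 ∧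
    q (k+3) (phim^[k+2] 5) ≤ 10 * q (k+2) (phim^[k+1] 5) := by
  have hP1 : q 2 (phim^[1] (5:ℝ)) = -4 := by
    rw [Function.iterate_one]
    show sf (phim 5) = -4
    have : phim (5:ℝ) = (5 - Real.sqrt 5)/2 := by
      unfold phim; norm_num
    rw [this]; exact sf_phim5
  intro k
  induction k with
  | zero =>
    constructor
    · rw [hP1]; norm_num
    · -- q 3 (phim^[2] 5) ≤ 10 * q 2 (phim^[1] 5) = -40
      rw [hP1]
      have hq3 : q 3 (phim^[2] (5:ℝ)) =
          sf (f (phim^[2] 5)) * sf (phim^[2] 5)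
            - rf (f (phim^[2] 5)) * lf (phim^[2] 5) := rfl
      rw [hq3, f_iter (by norm_num) (by norm_num) 1, Function.iterate_one]
      have h1 := u1_bounds
      have h2 := u2_bounds
      have hsu1 : sf (phim (5:ℝ)) = -4 := by
        have : phim (5:ℝ) = (5 - Real.sqrt 5)/2 := by unfold phim; norm_num
        rw [this]; exact sf_phim5
      rw [hsu1]
      have hr : rf (phim (5:ℝ)) * lf (phim^[2] (5:ℝ)) =
          2*(2 - phim 5)*(5 - phim 5)*(6 - phim^[2] 5) := by unfold rf lf; ring
      have hrpos : 0 ≤ rf (phim (5:ℝ)) * lf (phim^[2] (5:ℝ)) := by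
        rw [hr]
        have a1 : (0:ℝ) ≤ 2 - phim 5 := by linarith [h1.2]
        have a2 : (0:ℝ) ≤ 5 - phim 5 := by linarith [h1.2]
        have a3 : (0:ℝ) ≤ 6 - phim^[2] (5:ℝ) := by linarith [h2.2]
        exact mul_nonneg (mul_nonneg (mul_nonneg (by norm_num) a1) a2) a3
      have hsf2 : 10 ≤ sf (phim^[2] (5:ℝ)) := by
        unfold sf; nlinarith [h2.1, h2.2, sq_nonneg (phim^[2] (5:ℝ))]
      nlinarith [hsf2, hrpos]
  | succ n ih =>
    obtain ⟨ih1, ih2⟩ := ih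
    have hn2 : q (n+3) (phim^[n+2] 5) < 0 := lt_of_le_of_lt ih2 (by linarith)
    refine ⟨hn2, ?_⟩
    rw [q_orbit (by norm_num) (by norm_num) n]
    exact step_neg (iter_bounds (by norm_num) (by norm_num) (n+3)).1 (u_small n)
      (iter_bounds (by norm_num) (by norm_num) (n+2)).1 (u_le_one n) ih1 ih2

lemma main2 : ∀ k : ℕ, 0 < q (k+2) (phim^[k+1] 2) ∧
    10 * q (k+2) (phim^[k+1] 2) ≤ q (k+3) (phim^[k+2] 2) := by
  have h1 := v1_bounds
  have hT1 : (12:ℝ) ≤ q 2 (phim^[1] (2:ℝ)) := by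
    rw [Function.iterate_one]
    show (12:ℝ) ≤ sf (phim 2)
    unfold sf
    nlinarith [h1.1, h1.2, sq_nonneg (phim (2:ℝ) - 43/100),
      mul_nonneg (mul_nonneg (by linarith [h1.2] : (0:ℝ) ≤ 9/20 - phim 2)
        (by linarith [h1.1] : (0:ℝ) ≤ phim 2) ) (by linarith [h1.1] : (0:ℝ) ≤ phim 2)]
  intro k
  induction k with
  | zero =>
    refine ⟨by have : q 2 (phim^[1] (2:ℝ)) = q (0+2) (phim^[0+1] 2) := rfl
               linarith [this ▸ hT1], ?_⟩
    have h2 := v2_bounds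
    show 10 * q 2 (phim^[1] 2) ≤ q 3 (phim^[2] 2)
    have hq3 : q 3 (phim^[2] (2:ℝ)) =
        sf (f (phim^[2] 2)) * sf (phim^[2] 2)
          - rf (f (phim^[2] 2)) * lf (phim^[2] 2) := rfl
    have hf : f (phim^[2] (2:ℝ)) = phim^[1] 2 := f_iter (by norm_num) (by norm_num) 1
    rw [hq3, hf]
    rw [Function.iterate_one] at hT1 ⊢
    have hsv2 : 45/2 ≤ sf (phim^[2] (2:ℝ)) := sf_lb h2.1 h2.2
    have hL : rf (phim (2:ℝ)) * lf (phim^[2] (2:ℝ)) ≤ 90 := by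
      have e : rf (phim (2:ℝ)) * lf (phim^[2] (2:ℝ)) =
          2*((2 - phim 2)*(5 - phim 2))*(6 - phim^[2] 2) := by unfold rf lf; ring
      rw [e]
      nlinarith [h1.1, h1.2, h2.1, h2.2, sq_nonneg (phim (2:ℝ))]
    show 10 * sf (phim 2) ≤ sf (phim 2) * sf (phim^[2] 2) - rf (phim 2) * lf (phim^[2] 2)
    have hT1'' : (12:ℝ) ≤ sf (phim 2) := hT1
    nlinarith [mul_nonneg (by linarith : (0:ℝ) ≤ sf (phim^[2] (2:ℝ)) - 45/2)
      (by linarith : (0:ℝ) ≤ sf (phim (2:ℝ)) - 12)]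
  | succ n ih =>
    obtain ⟨ih1, ih2⟩ := ih
    have hn2 : 0 < q (n+3) (phim^[n+2] 2) := lt_of_lt_of_le (by linarith) ih2
    refine ⟨hn2, ?_⟩
    rw [q_orbit (by norm_num) (by norm_num) n]
    exact step_pos (iter_bounds (by norm_num) (by norm_num) (n+3)).1
      (by have := v_small (n+1); rwa [show n+1+2 = n+3 by ring] at this)
      (iter_bounds (by norm_num) (by norm_num) (n+2)).1
      (by have := v_small n; linarith) ih1 ih2

theorem statement_1 :
    (∀ m : ℕ, 2 ≤ m → q m (phim^[m - 1] 5) < 0 ∧ 0 < q m (phim^[m - 1] 2)) ∧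
    (∀ m : ℕ, 2 ≤ m → q (m + 1) (phim^[m] 5) ≤ 10 * q m (phim^[m - 1] 5)) := by
  constructor
  · intro m hm
    obtain ⟨n, rfl⟩ : ∃ n, m = n + 2 := ⟨m - 2, by omega⟩
    have e : n + 2 - 1 = n + 1 := by omega
    rw [e]
    exact ⟨(main5 n).1, (main2 n).1⟩
  · intro m hm
    obtain ⟨n, rfl⟩ : ∃ n, m = n + 2 := ⟨m - 2, by omega⟩
    have e : n + 2 - 1 = n + 1 := by omega
    rw [e]
    exact (main5 n).2
end
end

section
/- Let m ≥ 2 and suppose P, P' ∈ ℝ[X] satisfy P·D_m = Q_m and P'·D_{m+1} = Q_{m+1}. Then P has exactly r_m = 2^m + 2^{m−2} − 2 distinct real roots; listing them as λ₁ < λ₂ < … < λ_{r_m}, they satisfy 0 < λ₁, λ_{r_m−1} < 5 < λ_{r_m} < 6. Moreover, for every 1 ≤ k ≤ r_m one has (−1)^{m+k−1}·P'(φ₋(λ_k)) > 0 and (−1)^{m+k}·P'(φ₊(λ_k)) > 0. -/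
open Function

noncomputable section

open Polynomial

/-- The polynomial `F = 5X - X²`. -/
def F : ℝ[X] := C 5 * X - X ^ 2

/-- `Fiter i` is the `i`-fold composition `F^{(i)}`, with `Fiter 0 = X`. -/
def Fiter : ℕ → ℝ[X]
  | 0 => X
  | i + 1 => F.comp (Fiter i)

/-- Polynomial version of `l`. -/
def Lp : ℝ[X] := X - C 6

/-- Polynomial version of `s`. -/
def Sp : ℝ[X] := (C 2 - X) * (C 4 - X) * (C 5 - X) - (C 14 - C 3 * X)

/-- Polynomial version of `r`. -/
def Rp : ℝ[X] := -C 2 * (C 2 - X) * (C 5 - X)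

/-- `Qp m` is the polynomial `Q_m`, satisfying `(Qp m).eval x = q_m x`,
defined by the same recursion as `q_m`; meaningful for `m ≥ 2`. -/
def Qp : ℕ → ℝ[X]
  | 0 => 1
  | 1 => 1
  | 2 => Sp
  | 3 => Sp.comp (Fiter 1) * Sp - Rp.comp (Fiter 1) * Lp
  | m + 4 =>
      Sp.comp (Fiter (m + 2)) * Qp (m + 3) -
        Rp.comp (Fiter (m + 2)) * Lp.comp (Fiter (m + 1)) * Qp (m + 2)

/-- `Dp m = ∏_{i=0}^{m-3} (F^{(i)} - 2)`, with `Dp 2 = 1`. -/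
def Dp (m : ℕ) : ℝ[X] := ∏ i ∈ Finset.range (m - 2), (Fiter i - C 2)

/-- `r_m = 2^m + 2^{m-2} - 2`. -/
def rm (m : ℕ) : ℕ := 2 ^ m + 2 ^ (m - 2) - 2

/-!
Put `P_m = Q_m / D_m`. Expanding the continuant `Q_{m+1}` along its last row and cancelling
`D_{m+1} = (X - 2) · D_m ∘ F` gives `P_{m+1} · (X - 2) = S · P_m ∘ F - 2 (5 - F) L · P_{m-1} ∘ F²`.
Hence `deg P_{m+1} = 2 deg P_m + 2`, and at any `x` with `f x = μ` a root of `P_m`,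
`P_{m+1}(x) · (x - 2) = -2 (5 - μ) (x - 6) · P_{m-1}(f μ)`.

Induct on `m`. If `λ_1 < ⋯ < λ_r` are the roots of `P_m`, then `P_{m+1}` alternates in sign
along `0 < φ₋(λ_1) < ⋯ < φ₋(λ_r) < φ₊(λ_r) < ⋯ < φ₊(λ_1) < 5 < 6`, so it has one root `μ_j` in
each of these `2r + 2 = deg P_{m+1}` gaps and no others. Since `f` maps each gap between
consecutive roots of `P_m`, the sign of `(5 - μ_j) P_m(f μ_j)` is known, and the identity above
(one level up) turns it into the signs of `P_{m+2}` at `φ±(μ_j)` needed for the next step.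
-/

theorem exists_interlacing_zeros {g : ℝ → ℝ} (hg : Continuous g) {a : ℕ → ℝ} {n e : ℕ}
    (ha : ∀ j < n, a j < a (j + 1)) (hsign : ∀ j ≤ n, 0 < (-1) ^ (e + j) * g (a j)) :
    ∃ μ : ℕ → ℝ, μ 0 = a 0 ∧ StrictMonoOn μ (Set.Icc 0 n) ∧
      ∀ j < n, a j < μ (j + 1) ∧ μ (j + 1) < a (j + 1) ∧ g (μ (j + 1)) = 0 := by
  have hzero : ∀ j, ∃ x, j < n → a j < x ∧ x < a (j + 1) ∧ g x = 0 := by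
    intro j
    by_cases hj : j < n
    · have hcont : ContinuousOn (fun x => (-1) ^ (e + j) * g x) (Set.Icc (a j) (a (j + 1))) :=
        (continuous_const.mul hg).continuousOn
      have hnext := hsign (j + 1) hj
      rw [← add_assoc, pow_succ, mul_neg_one, neg_mul] at hnext
      obtain ⟨x, hx, hgx⟩ := intermediate_value_Ioo' (ha j hj).le hcont
        ⟨neg_pos.mp hnext, hsign j hj.le⟩
      exact ⟨x, fun _ => ⟨hx.1, hx.2, by simpa using hgx⟩⟩
    · exact ⟨0, fun h => absurd h hj⟩
  choose ν hν using hzero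
  let μ : ℕ → ℝ := fun | 0 => a 0 | j + 1 => ν j
  refine ⟨μ, rfl, strictMonoOn_of_lt_add_one Set.ordConnected_Icc ?_, fun j hj => hν j hj⟩
  rintro (_ | j) - - hj
  · exact (hν 0 (by have := (Set.mem_Icc.mp hj).2; omega)).1
  · have := (Set.mem_Icc.mp hj).2
    exact ((hν j (by omega)).2.1).trans (hν (j + 1) (by omega)).1

theorem eq_C_leadingCoeff_mul_prod_X_sub_C {K ι : Type*} [Field K] {p : K[X]} {s : Finset ι}
    {x : ι → K} (hx : Set.InjOn x s) (hroot : ∀ i ∈ s, p.eval (x i) = 0)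
    (hdeg : p.natDegree ≤ s.card) :
    p = C p.leadingCoeff * ∏ i ∈ s, (X - C (x i)) := by
  refine eq_leadingCoeff_mul_of_monic_of_dvd_of_natDegree_le
    (monic_prod_of_monic _ _ fun i _ => monic_X_sub_C (x i)) ?_ (by simpa using hdeg)
  refine Finset.prod_dvd_of_coprime (fun i hi j hj hij => ?_) fun i hi =>
    dvd_iff_isRoot.mpr (hroot i hi)
  exact isCoprime_X_sub_C_of_isUnit_sub (sub_ne_zero_of_ne fun h => hij (hx hi hj h)).isUnit

theorem neg_one_pow_mul_prod_sub_pos {lam : ℕ → ℝ} {t : ℝ} {i : ℕ}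
    (hlo : ∀ k, 1 ≤ k → k ≤ i → lam k < t) :
    ∀ r, i ≤ r → (∀ k, i < k → k ≤ r → t < lam k) →
      0 < (-1) ^ (r - i) * ∏ k ∈ Finset.Icc 1 r, (t - lam k) := by
  refine Nat.le_induction ?_ fun r hir ih hhi => ?_
  · intro _
    simpa using Finset.prod_pos fun k hk =>
      sub_pos.mpr (hlo k (Finset.mem_Icc.mp hk).1 (Finset.mem_Icc.mp hk).2)
  · rw [Finset.prod_Icc_succ_top (by omega), Nat.sub_add_comm hir, pow_succ]
    have := ih fun k hk hkr => hhi k hk (by omega)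
    have := hhi (r + 1) (by omega) le_rfl
    nlinarith

theorem neg_one_pow_eq_of_mod_two_eq {R : Type*} [Monoid R] [HasDistribNeg R] {a b : ℕ}
    (h : a % 2 = b % 2) : (-1 : R) ^ a = (-1) ^ b :=
  neg_one_pow_congr (by simp only [Nat.even_iff, h])

section Branches

variable {y : ℝ}

theorem f_phim_s5 (hy : y ≤ 25 / 4) : f (phim y) = y := by
  unfold f phim; nlinarith [Real.sq_sqrt (show 0 ≤ 25 - 4 * y by linarith)]

theorem f_phip (hy : y ≤ 25 / 4) : f (phip y) = y := by
  unfold f phip; nlinarith [Real.sq_sqrt (show 0 ≤ 25 - 4 * y by linarith)]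

theorem phim_zero : phim 0 = 0 := by
  norm_num [phim, show Real.sqrt 25 = 5 by rw [show (25 : ℝ) = 5 ^ 2 by norm_num]; simp]

theorem phip_zero : phip 0 = 5 := by
  norm_num [phip, show Real.sqrt 25 = 5 by rw [show (25 : ℝ) = 5 ^ 2 by norm_num]; simp]

theorem phim_le : phim y ≤ 5 / 2 := by
  unfold phim; linarith [Real.sqrt_nonneg (25 - 4 * y)]

theorem le_phip : 5 / 2 ≤ phip y := by
  unfold phip; linarith [Real.sqrt_nonneg (25 - 4 * y)]

theorem one_lt_sqrt_25_sub (hy : y < 6) : 1 < Real.sqrt (25 - 4 * y) :=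
  Real.lt_sqrt_of_sq_lt (by linarith)

theorem phim_lt_two (hy : y < 6) : phim y < 2 := by
  unfold phim; linarith [one_lt_sqrt_25_sub hy]

theorem two_lt_phip (hy : y < 6) : 2 < phip y := by
  unfold phip; linarith [one_lt_sqrt_25_sub hy]

theorem phip_le_five (hy : 0 ≤ y) : phip y ≤ 5 := by
  have : Real.sqrt (25 - 4 * y) ≤ 5 := Real.sqrt_le_iff.mpr ⟨by norm_num, by linarith⟩
  unfold phip; linarith

theorem phim_lt_phip (hy : y < 25 / 4) : phim y < phip y := by
  unfold phim phip; linarith [Real.sqrt_pos.mpr (show 0 < 25 - 4 * y by linarith)]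

theorem phim_strictMonoOn : StrictMonoOn phim (Set.Iic (25 / 4)) := by
  intro a _ b hb hab
  have := Real.sqrt_lt_sqrt (by linarith [Set.mem_Iic.mp hb])
    (show 25 - 4 * b < 25 - 4 * a by linarith)
  unfold phim; linarith

theorem phip_strictAntiOn : StrictAntiOn phip (Set.Iic (25 / 4)) := by
  intro a _ b hb hab
  have := Real.sqrt_lt_sqrt (by linarith [Set.mem_Iic.mp hb])
    (show 25 - 4 * b < 25 - 4 * a by linarith)
  unfold phip; linarith

theorem f_strictMonoOn : StrictMonoOn f (Set.Iic (5 / 2)) := by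
  intro a _ b hb hab
  simp only [Set.mem_Iic] at hb
  unfold f; nlinarith

theorem f_strictAntiOn : StrictAntiOn f (Set.Ici (5 / 2)) := by
  intro a ha b _ hab
  simp only [Set.mem_Ici] at ha
  unfold f; nlinarith

end Branches

section Location

variable {a b μ : ℝ}

theorem lt_f_of_phim_lt (h : phim a < μ) (hμ : μ ≤ 5 / 2) (ha : a ≤ 25 / 4) : a < f μ := by
  simpa [f_phim_s5 ha] using f_strictMonoOn phim_le hμ h

theorem f_lt_of_lt_phim (h : μ < phim b) (hb : b ≤ 25 / 4) : f μ < b := by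
  simpa [f_phim_s5 hb] using f_strictMonoOn (h.le.trans phim_le) phim_le h

theorem lt_f_of_lt_phip (h : μ < phip a) (hμ : 5 / 2 ≤ μ) (ha : a ≤ 25 / 4) : a < f μ := by
  simpa [f_phip ha] using f_strictAntiOn hμ le_phip h

theorem f_lt_of_phip_lt (h : phip b < μ) (hb : b ≤ 25 / 4) : f μ < b := by
  simpa [f_phip hb] using f_strictAntiOn le_phip (le_phip.trans h.le) h

theorem lt_f_of_phim_lt_of_lt_phip (h₁ : phim a < μ) (h₂ : μ < phip a) (ha : a ≤ 25 / 4) :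
    a < f μ := by
  rcases le_total μ (5 / 2) with hμ | hμ
  · exact lt_f_of_phim_lt h₁ hμ ha
  · exact lt_f_of_lt_phip h₂ hμ ha

end Location

theorem Fiter_comp (i j : ℕ) : (Fiter i).comp (Fiter j) = Fiter (i + j) := by
  induction i with
  | zero => simp [Fiter]
  | succ i ih => rw [Fiter, Polynomial.comp_assoc, ih, Nat.succ_add, Fiter]

theorem Fiter_one : Fiter 1 = F := comp_X

theorem Fiter_comp_F (i : ℕ) : (Fiter i).comp F = Fiter (i + 1) := by
  rw [← Fiter_one, Fiter_comp]

theorem eval_F (x : ℝ) : F.eval x = f x := by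
  simp only [F, eval_sub, eval_mul, eval_C, eval_X, eval_pow, f]; ring

theorem eval_Fiter_two (x : ℝ) : (Fiter 2).eval x = f (f x) := by
  simp [Fiter, eval_F]

theorem eval_Fiter_zero (i : ℕ) : (Fiter i).eval 0 = 0 := by
  induction i with
  | zero => simp [Fiter]
  | succ i ih => simp [Fiter, ih, F]

theorem Rp_comp_F : Rp.comp F = C 2 * (F - C 2) * (C 5 - F) := by
  simp only [Rp, mul_comp, sub_comp, neg_comp, C_comp, X_comp]; ring

theorem Qp_add_three_first_row (n : ℕ) : Qp (n + 3) = Sp.comp (Fiter (n + 1)) * Qp (n + 2) -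
    Rp.comp (Fiter (n + 1)) * Lp.comp (Fiter n) * Qp (n + 1) := by
  cases n with
  | zero => simp [Qp, Fiter]
  | succ n => rfl

theorem Qp_add_three_first_row_comp (n i : ℕ) : (Qp (n + 3)).comp (Fiter i) =
    Sp.comp (Fiter (n + i + 1)) * (Qp (n + 2)).comp (Fiter i) -
      Rp.comp (Fiter (n + i + 1)) * Lp.comp (Fiter (n + i)) * (Qp (n + 1)).comp (Fiter i) := by
  rw [Qp_add_three_first_row]
  simp only [sub_comp, mul_comp, Polynomial.comp_assoc, Fiter_comp, Nat.add_right_comm n 1 i]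

theorem Qp_add_three_last_row (n : ℕ) : Qp (n + 3) =
    Sp * (Qp (n + 2)).comp F - Rp.comp F * Lp * (Qp (n + 1)).comp (Fiter 2) := by
  rw [← Fiter_one]
  induction n using Nat.twoStepInduction with
  | zero => simp only [Qp, one_comp, mul_one, sub_left_inj]; ring
  | one =>
    rw [Qp_add_three_first_row_comp 0 1, Qp_add_three_first_row 1]
    simp only [Fiter, comp_X, Qp, one_comp, mul_one]; ring
  | more n ih₁ ih₂ =>
    have e := Qp_add_three_first_row (n + 2)
    have c₁ := Qp_add_three_first_row_comp (n + 1) 1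
    have c₂ := Qp_add_three_first_row_comp n 2
    simp only [add_assoc, Nat.reduceAdd] at *
    linear_combination e - Sp * c₁ + Rp.comp (Fiter 1) * Lp * c₂ + Sp.comp (Fiter (n + 3)) * ih₂ -
      Rp.comp (Fiter (n + 3)) * Lp.comp (Fiter (n + 2)) * ih₁

theorem Dp_add_three (n : ℕ) : Dp (n + 3) = (X - C 2) * (Dp (n + 2)).comp F := by
  simp only [Dp, Nat.add_sub_cancel, show n + 3 - 2 = n + 1 by omega, Finset.prod_range_succ',
    Polynomial.prod_comp, sub_comp, C_comp, Fiter_comp_F]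
  rw [mul_comm]; rfl

theorem Dp_ne_zero (m : ℕ) : Dp m ≠ 0 :=
  Finset.prod_ne_zero_iff.mpr fun i _ h => by
    simpa [eval_Fiter_zero] using congrArg (Polynomial.eval 0) h

/-- The right-hand side of `P_{m+1} · (X - 2) = S · P_m ∘ F - 2 (5 - F) L · g`, where `g = F - 2`
for `m = 2` and `g = P_{m-1} ∘ F²` for `m ≥ 3`. -/
def stepNum (p g : ℝ[X]) : ℝ[X] := Sp * p.comp F - C 2 * (C 5 - F) * Lp * g

/-- `P_m = Q_m / D_m` (see `Pm_mul_Dp`); the division by `X - 2` is exact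
(`stepNum_divByMonic_mul`), and `0` for `m < 2` is a placeholder. -/
def Pm : ℕ → ℝ[X]
  | 2 => Sp
  | 3 => stepNum Sp (F - C 2) /ₘ (X - C 2)
  | n + 4 => stepNum (Pm (n + 3)) ((Pm (n + 2)).comp (Fiter 2)) /ₘ (X - C 2)
  | _ => 0

theorem natDegree_F : F.natDegree = 2 := by unfold F; compute_degree!

theorem leadingCoeff_F : F.leadingCoeff = -1 := by rw [leadingCoeff, natDegree_F]; simp [F]

theorem natDegree_Fiter_two : (Fiter 2).natDegree = 4 := by
  simp [Fiter, natDegree_comp, natDegree_F]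

theorem natDegree_Sp : Sp.natDegree = 3 := by unfold Sp; compute_degree!

theorem leadingCoeff_Sp : Sp.leadingCoeff = -1 := by
  rw [leadingCoeff, natDegree_Sp]; simp [Sp, sub_mul, mul_sub, coeff_X, coeff_mul_X, coeff_mul_C]

section StepNum

variable (p g : ℝ[X])

theorem eval_stepNum (x : ℝ) : (stepNum p g).eval x =
    sf x * p.eval (f x) - 2 * (5 - f x) * (x - 6) * g.eval x := by
  simp [stepNum, Sp, Lp, sf, eval_F]

theorem eval_stepNum_two : (stepNum p g).eval 2 = -8 * (p.eval 6 + g.eval 2) := by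
  norm_num [eval_stepNum, sf, f]; ring

theorem eval_stepNum_six : (stepNum p g).eval 6 = -4 * p.eval (-6) := by
  norm_num [eval_stepNum, sf, f]

theorem eval_stepNum_zero : (stepNum p g).eval 0 = 26 * p.eval 0 + 60 * g.eval 0 := by
  norm_num [eval_stepNum, sf, f]

theorem eval_stepNum_five : (stepNum p g).eval 5 = p.eval 0 + 10 * g.eval 5 := by
  norm_num [eval_stepNum, sf, f]

theorem eval_stepNum_of_eval_eq_zero {x μ : ℝ} (hx : F.eval x = μ) (hμ : p.eval μ = 0) :
    (stepNum p g).eval x = -2 * (5 - μ) * (x - 6) * g.eval x := by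
  rw [eval_stepNum, ← eval_F, hx, hμ]; ring

theorem stepNum_divByMonic_mul (h : p.eval 6 = -g.eval 2) :
    (stepNum p g /ₘ (X - C 2)) * (X - C 2) = stepNum p g := by
  rw [mul_comm]
  refine mul_divByMonic_eq_iff_isRoot.mpr ?_
  rw [IsRoot, eval_stepNum_two, h, neg_add_cancel, mul_zero]

theorem natDegree_and_leadingCoeff_stepNum_divByMonic (hp : p ≠ 0)
    (hg : g.natDegree < 2 * p.natDegree) :
    (stepNum p g /ₘ (X - C 2)).natDegree = 2 * p.natDegree + 2 ∧
      (stepNum p g /ₘ (X - C 2)).leadingCoeff = (-1) ^ (p.natDegree + 1) * p.leadingCoeff := by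
  have hpF : (p.comp F).natDegree = 2 * p.natDegree := by rw [natDegree_comp, natDegree_F, mul_comm]
  have hpFlc : (p.comp F).leadingCoeff = p.leadingCoeff * (-1) ^ p.natDegree := by
    rw [leadingCoeff_comp (by rw [natDegree_F]; norm_num), leadingCoeff_F]
  have hlead : (Sp * p.comp F).natDegree = 2 * p.natDegree + 3 := by
    rw [natDegree_mul' (by simp [leadingCoeff_Sp, hpFlc, hp]), natDegree_Sp, hpF, add_comm]
  have htail : (C 2 * (C 5 - F) * Lp * g).natDegree < (Sp * p.comp F).natDegree := by
    have : (C 2 * (C 5 - F) * Lp).natDegree ≤ 3 := by unfold F Lp; compute_degree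
    rw [hlead]; linarith [natDegree_mul_le (p := C 2 * (C 5 - F) * Lp) (q := g)]
  have hN : (stepNum p g).natDegree = 2 * p.natDegree + 3 := by
    rw [stepNum, natDegree_sub_eq_left_of_natDegree_lt htail, hlead]
  refine ⟨by rw [natDegree_divByMonic _ (monic_X_sub_C 2), hN, natDegree_X_sub_C]; rfl, ?_⟩
  have hN₀ : (stepNum p g).degree ≠ 0 := by
    rw [degree_eq_natDegree (by rintro h; simp [h] at hN), hN]; norm_cast
  rw [leadingCoeff_divByMonic_X_sub_C _ hN₀, stepNum,
    leadingCoeff_sub_of_degree_lt (degree_lt_degree htail), leadingCoeff_mul, leadingCoeff_Sp,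
    hpFlc, pow_succ]
  ring

end StepNum

theorem Qp_three : Qp 3 = stepNum Sp (F - C 2) := by
  simp only [Qp, Fiter_one, stepNum, Rp_comp_F]; ring

theorem Pm_three_mul : Pm 3 * (X - C 2) = stepNum Sp (F - C 2) :=
  stepNum_divByMonic_mul _ _ (by norm_num [Sp, F])

theorem stepNum_comp_divByMonic_mul {p q : ℝ[X]} (h : p.eval 6 = -q.eval (-6)) :
    (stepNum p (q.comp (Fiter 2)) /ₘ (X - C 2)) * (X - C 2) = stepNum p (q.comp (Fiter 2)) :=
  stepNum_divByMonic_mul _ _ <| by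
    rwa [eval_comp, eval_Fiter_two, show f (f 2) = -6 by norm_num [f]]

theorem eval_Pm_six : ∀ n, (Pm (n + 3)).eval 6 = -(Pm (n + 2)).eval (-6)
  | 0 => by
    have h := congrArg (Polynomial.eval 6) Pm_three_mul
    rw [eval_mul, eval_stepNum_six] at h
    rw [show Pm 2 = Sp from rfl]; norm_num at h; linarith
  | n + 1 => by
    have h : Pm (n + 4) * (X - C 2) = _ := stepNum_comp_divByMonic_mul (eval_Pm_six n)
    replace h := congrArg (Polynomial.eval 6) h
    rw [eval_mul, eval_stepNum_six] at h
    norm_num at h ⊢; linarith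

theorem Pm_add_four_mul (n : ℕ) :
    Pm (n + 4) * (X - C 2) = stepNum (Pm (n + 3)) ((Pm (n + 2)).comp (Fiter 2)) :=
  stepNum_comp_divByMonic_mul (eval_Pm_six n)

theorem Pm_mul_Dp (n : ℕ) : Pm (n + 2) * Dp (n + 2) = Qp (n + 2) := by
  induction n using Nat.twoStepInduction with
  | zero => simp [Pm, Dp, Qp]
  | one => simpa [Dp, Fiter, Qp_three] using Pm_three_mul
  | more n ih₁ ih₂ =>
    have hD : (Dp (n + 3)).comp F = (F - C 2) * (Dp (n + 2)).comp (Fiter 2) := by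
      rw [Dp_add_three, mul_comp, Polynomial.comp_assoc, ← Fiter_comp_F, Fiter_one]; simp
    have key := Pm_add_four_mul n
    rw [stepNum] at key
    rw [show n + 2 + 2 = n + 1 + 3 from rfl, Qp_add_three_last_row, Dp_add_three, hD, ← ih₂, ← ih₁,
      mul_comp, mul_comp, hD, Rp_comp_F]
    linear_combination ((F - C 2) * (Dp (n + 2)).comp (Fiter 2)) * key

theorem rm_add_three (n : ℕ) : rm (n + 3) = 2 * rm (n + 2) + 2 := by
  simp only [rm, Nat.add_sub_cancel, show n + 3 - 2 = n + 1 by omega, pow_succ]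
  have := Nat.one_le_two_pow (n := n)
  omega

theorem natDegree_Pm_and_leadingCoeff (n : ℕ) : (Pm (n + 2)).natDegree = rm (n + 2) ∧
    (Pm (n + 2)).leadingCoeff = (-1) ^ (n + 2 + rm (n + 2)) := by
  induction n using Nat.twoStepInduction with
  | zero => exact ⟨natDegree_Sp, by rw [show Pm 2 = Sp from rfl, leadingCoeff_Sp]; norm_num [rm]⟩
  | one =>
    have hg : (F - C 2).natDegree = 2 := by unfold F; compute_degree!
    obtain ⟨hd, hl⟩ := natDegree_and_leadingCoeff_stepNum_divByMonic Sp (F - C 2)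
      (by rintro h; simpa [h] using natDegree_Sp) (by rw [hg, natDegree_Sp]; norm_num)
    refine ⟨hd.trans ?_, hl.trans ?_⟩ <;> norm_num [natDegree_Sp, leadingCoeff_Sp, rm]
  | more n ih₁ ih₂ =>
    obtain ⟨hd₂, hl₂⟩ := ih₂
    have hg : ((Pm (n + 2)).comp (Fiter 2)).natDegree < 2 * (Pm (n + 3)).natDegree := by
      rw [natDegree_comp, natDegree_Fiter_two, ih₁.1, hd₂, rm_add_three]; omega
    obtain ⟨hd, hl⟩ := natDegree_and_leadingCoeff_stepNum_divByMonic _ _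
      (ne_zero_of_natDegree_gt (n := 0) (by rw [hd₂, rm_add_three]; omega)) hg
    refine ⟨hd.trans ?_, hl.trans ?_⟩
    · rw [hd₂, rm_add_three (n + 1)]
    · rw [hd₂, hl₂, rm_add_three (n + 1), ← pow_add]
      exact neg_one_pow_eq_of_mod_two_eq (by omega)

theorem neg_one_pow_mul_eval_Pm_zero (n : ℕ) : 0 < (-1) ^ n * (Pm (n + 2)).eval 0 ∧
    10 * ((-1) ^ n * (Pm (n + 2)).eval 0) < (-1) ^ (n + 1) * (Pm (n + 3)).eval 0 := by
  induction n with
  | zero =>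
    have h := congrArg (Polynomial.eval 0) Pm_three_mul
    rw [eval_mul, eval_stepNum_zero] at h
    norm_num [Sp, F] at h
    norm_num [show Pm 2 = Sp from rfl, Sp]; linarith
  | succ n ih =>
    have h := congrArg (Polynomial.eval 0) (Pm_add_four_mul n)
    rw [eval_mul, eval_stepNum_zero, eval_comp, eval_Fiter_zero] at h
    rw [show n + 1 + 2 = n + 3 from rfl, show n + 1 + 3 = n + 4 from rfl]
    simp only [pow_succ] at ih ⊢
    have e : (-1) ^ n * -1 * -1 * (Pm (n + 4)).eval 0 =
        13 * ((-1) ^ n * -1 * (Pm (n + 3)).eval 0) - 30 * ((-1) ^ n * (Pm (n + 2)).eval 0) := by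
      simp only [eval_sub, eval_X, eval_C, zero_sub, mul_neg] at h
      linear_combination (-(-1) ^ n / 2 : ℝ) * h
    constructor <;> linarith [ih.1, ih.2]

theorem neg_one_pow_mul_eval_Pm_five (n : ℕ) : 0 < (-1) ^ n * (Pm (n + 3)).eval 5 := by
  cases n with
  | zero =>
    have h := congrArg (Polynomial.eval 5) Pm_three_mul
    rw [eval_mul, eval_stepNum_five] at h
    norm_num [Sp, F] at h ⊢; linarith
  | succ n =>
    have h := congrArg (Polynomial.eval 5) (Pm_add_four_mul n)
    rw [eval_mul, eval_stepNum_five, eval_comp, eval_Fiter_two,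
      show f (f 5) = 0 by norm_num [f]] at h
    have hv := (neg_one_pow_mul_eval_Pm_zero n).2
    rw [pow_succ] at hv ⊢
    have e : (-1) ^ n * -1 * (Pm (n + 4)).eval 5 * 3 =
        (-1) ^ n * -1 * (Pm (n + 3)).eval 0 - 10 * ((-1) ^ n * (Pm (n + 2)).eval 0) := by
      simp only [eval_sub, eval_X, eval_C] at h
      linear_combination ((-1) ^ n * -1 : ℝ) * h
    show 0 < (-1) ^ n * -1 * (Pm (n + 4)).eval 5
    linarith

theorem Pm_three_eval_mul {x μ : ℝ} (hx : F.eval x = μ) (hμ : Sp.eval μ = 0) :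
    (Pm 3).eval x * (x - 2) = -2 * (5 - μ) * (x - 6) * (μ - 2) := by
  have h := congrArg (Polynomial.eval x) Pm_three_mul
  rw [eval_mul, eval_stepNum_of_eval_eq_zero _ _ hx hμ] at h
  simpa [hx] using h

theorem Pm_add_four_eval_mul {n : ℕ} {x μ : ℝ} (hx : F.eval x = μ) (hμ : (Pm (n + 3)).eval μ = 0) :
    (Pm (n + 4)).eval x * (x - 2) = -2 * (5 - μ) * (x - 6) * (Pm (n + 2)).eval (f μ) := by
  have h := congrArg (Polynomial.eval x) (Pm_add_four_mul n)
  rw [eval_mul, eval_stepNum_of_eval_eq_zero _ _ hx hμ, eval_comp, eval_Fiter_two, ← eval_F x,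
    hx] at h
  simpa using h

/-- At the preimages `φ₋(μ) < 2 < φ₊(μ) < 6` the factors `(x - 2, x - 6)` of the identity have
signs `(-, -)` and `(+, -)`. -/
theorem sign_eval_phim_phip {p : ℝ[X]} {e : ℕ} {μ W : ℝ} (hμ₀ : 0 ≤ μ) (hμ₆ : μ < 6)
    (hid : ∀ x, F.eval x = μ → p.eval x * (x - 2) = -2 * (5 - μ) * (x - 6) * W)
    (hW : 0 < (-1) ^ e * ((5 - μ) * W)) :
    0 < (-1) ^ (e + 1) * p.eval (phim μ) ∧ 0 < (-1) ^ e * p.eval (phip μ) := by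
  have key : ∀ x, F.eval x = μ → x < 6 → 0 < (-1) ^ e * p.eval x * (x - 2) := by
    intro x hx h6
    have : (-1) ^ e * p.eval x * (x - 2) = 2 * (6 - x) * ((-1) ^ e * ((5 - μ) * W)) := by
      linear_combination (-1) ^ e * hid x hx
    rw [this]; exact mul_pos (by linarith) hW
  have hm := phim_lt_two hμ₆
  have hp := two_lt_phip hμ₆
  have hm' := key (phim μ) (by rw [eval_F, f_phim_s5 (by linarith)]) (by linarith)
  have hp' := key (phip μ) (by rw [eval_F, f_phip (by linarith)]) (by linarith [phip_le_five hμ₀])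
  rw [pow_succ]
  constructor <;> nlinarith

theorem Pm_eq_prod {m : ℕ} (hm : 2 ≤ m) {lam : ℕ → ℝ}
    (hmono : StrictMonoOn lam (Set.Icc 1 (rm m)))
    (hroot : ∀ k ∈ Finset.Icc 1 (rm m), (Pm m).eval (lam k) = 0) :
    Pm m = C ((-1) ^ (m + rm m)) * ∏ k ∈ Finset.Icc 1 (rm m), (X - C (lam k)) := by
  obtain ⟨n, rfl⟩ := Nat.exists_eq_add_of_le' hm
  have h := eq_C_leadingCoeff_mul_prod_X_sub_C (hmono.injOn.mono (by simp)) hroot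
    (by simp [(natDegree_Pm_and_leadingCoeff n).1])
  rwa [(natDegree_Pm_and_leadingCoeff n).2] at h

theorem sign_phim_phip_zero {m : ℕ} (hm : 2 ≤ m) :
    0 < (-1) ^ (m + 0 + 1) * (Pm (m + 1)).eval (phim 0) ∧
      0 < (-1) ^ (m + 0) * (Pm (m + 1)).eval (phip 0) := by
  obtain ⟨n, rfl⟩ := Nat.exists_eq_add_of_le' hm
  rw [phim_zero, phip_zero, add_zero]
  refine ⟨?_, ?_⟩
  · have := (neg_one_pow_mul_eval_Pm_zero (n + 1)).1
    rwa [neg_one_pow_eq_of_mod_two_eq (a := n + 1) (b := n + 2 + 1) (by omega)] at this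
  · have := neg_one_pow_mul_eval_Pm_five n
    rwa [neg_one_pow_eq_of_mod_two_eq (a := n) (b := n + 2) (by omega)] at this

/-- The induction invariant. The sign conditions on `P_{m+1}` are what force the roots one level
up; the convention `lam 0 = 0` makes `φ₋(0) = 0` and `φ₊(0) = 5` the outermost anchors. -/
structure RootData (m : ℕ) (lam : ℕ → ℝ) : Prop where
  zero : lam 0 = 0
  strictMonoOn : StrictMonoOn lam (Set.Icc 0 (rm m))
  penultimate_lt_five : lam (rm m - 1) < 5
  five_lt_last : 5 < lam (rm m)
  last_lt_six : lam (rm m) < 6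
  eq_prod : Pm m = C ((-1) ^ (m + rm m)) * ∏ k ∈ Finset.Icc 1 (rm m), (X - C (lam k))
  sign_phim : ∀ k ≤ rm m, 0 < (-1) ^ (m + k + 1) * (Pm (m + 1)).eval (phim (lam k))
  sign_phip : ∀ k ≤ rm m, 0 < (-1) ^ (m + k) * (Pm (m + 1)).eval (phip (lam k))

/-- The points `0 = φ₋(λ₀) < φ₋(λ₁) < ⋯ < φ₋(λ_r) < φ₊(λ_r) < ⋯ < φ₊(λ₀) = 5 < 6`. -/
def anchor (r : ℕ) (lam : ℕ → ℝ) (j : ℕ) : ℝ :=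
  if j ≤ r then phim (lam j) else if j ≤ 2 * r + 1 then phip (lam (2 * r + 1 - j)) else 6

namespace RootData

variable {m : ℕ} {lam : ℕ → ℝ} (h : RootData m lam)
include h

theorem le_of_le {i j : ℕ} (hij : i ≤ j) (hj : j ≤ rm m) : lam i ≤ lam j :=
  h.strictMonoOn.monotoneOn ⟨Nat.zero_le _, hij.trans hj⟩ ⟨Nat.zero_le _, hj⟩ hij

theorem lt_of_lt {i j : ℕ} (hij : i < j) (hj : j ≤ rm m) : lam i < lam j :=
  h.strictMonoOn ⟨Nat.zero_le _, hij.le.trans hj⟩ ⟨Nat.zero_le _, hj⟩ hij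

theorem nonneg {k : ℕ} (hk : k ≤ rm m) : 0 ≤ lam k :=
  h.zero ▸ h.le_of_le (Nat.zero_le k) hk

theorem lt_six {k : ℕ} (hk : k ≤ rm m) : lam k < 6 :=
  (h.le_of_le hk le_rfl).trans_lt h.last_lt_six

theorem le_25_div_4 {k : ℕ} (hk : k ≤ rm m) : lam k ≤ 25 / 4 := by
  linarith [h.lt_six hk]

theorem eval_eq_zero_iff {x : ℝ} :
    (Pm m).eval x = 0 ↔ ∃ k : ℕ, 1 ≤ k ∧ k ≤ rm m ∧ lam k = x := by
  rw [h.eq_prod, eval_mul, eval_C, mul_eq_zero, or_iff_right (pow_ne_zero _ (by norm_num)),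
    eval_prod, Finset.prod_eq_zero_iff]
  simp [sub_eq_zero, eq_comm, and_assoc]

theorem sign_eval {i : ℕ} {t : ℝ} (hi : i ≤ rm m) (hlo : 0 < i → lam i < t)
    (hhi : i < rm m → t < lam (i + 1)) : 0 < (-1) ^ (m + i) * (Pm m).eval t := by
  have hprod := neg_one_pow_mul_prod_sub_pos (lam := lam) (t := t) (i := i)
    (fun k hk hki => (h.le_of_le hki hi).trans_lt (hlo (by omega))) (rm m) hi
    (fun k hik hk => (hhi (by omega)).trans_le (h.le_of_le hik hk))
  rw [h.eq_prod, eval_mul, eval_C, eval_prod, ← mul_assoc, ← pow_add]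
  simp only [eval_sub, eval_X, eval_C]
  rwa [neg_one_pow_eq_of_mod_two_eq (b := rm m - i) (by omega)]

end RootData

section Anchor

variable {r j : ℕ} {lam : ℕ → ℝ}

theorem anchor_of_le (hj : j ≤ r) : anchor r lam j = phim (lam j) := if_pos hj

theorem anchor_of_lt_of_le (h₁ : r < j) (h₂ : j ≤ 2 * r + 1) :
    anchor r lam j = phip (lam (2 * r + 1 - j)) := by
  rw [anchor, if_neg h₁.not_ge, if_pos h₂]

theorem anchor_of_lt (hj : 2 * r + 1 < j) : anchor r lam j = 6 := by
  rw [anchor, if_neg (by omega), if_neg hj.not_ge]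

end Anchor

namespace RootData

variable {m : ℕ} {lam : ℕ → ℝ} (h : RootData m lam)
include h

theorem anchor_lt_succ {j : ℕ} (hj : j < 2 * rm m + 2) :
    anchor (rm m) lam j < anchor (rm m) lam (j + 1) := by
  rcases lt_trichotomy j (rm m) with hjr | rfl | hjr
  · rw [anchor_of_le hjr.le, anchor_of_le hjr]
    exact phim_strictMonoOn (h.le_25_div_4 hjr.le) (h.le_25_div_4 hjr)
      (h.lt_of_lt j.lt_succ_self hjr)
  · rw [anchor_of_le le_rfl, anchor_of_lt_of_le (Nat.lt_succ_self _) (by omega),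
      show 2 * rm m + 1 - (rm m + 1) = rm m by omega]
    exact phim_lt_phip (by linarith [h.last_lt_six])
  · by_cases hj' : j + 1 ≤ 2 * rm m + 1
    · rw [anchor_of_lt_of_le hjr (by omega), anchor_of_lt_of_le (by omega) hj',
        show 2 * rm m + 1 - j = 2 * rm m - j + 1 by omega,
        show 2 * rm m + 1 - (j + 1) = 2 * rm m - j by omega]
      exact phip_strictAntiOn (h.le_25_div_4 (by omega)) (h.le_25_div_4 (by omega))
        (h.lt_of_lt (Nat.lt_succ_self _) (by omega))
    · rw [anchor_of_lt_of_le hjr (by omega), anchor_of_lt (by omega),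
        show 2 * rm m + 1 - j = 0 by omega, h.zero, phip_zero]
      norm_num

theorem sign_anchor (hm : 2 ≤ m) {j : ℕ} (hj : j ≤ 2 * rm m + 2) :
    0 < (-1) ^ (m + 1 + j) * (Pm (m + 1)).eval (anchor (rm m) lam j) := by
  by_cases h₁ : j ≤ rm m
  · rw [anchor_of_le h₁, Nat.add_right_comm]
    exact h.sign_phim j h₁
  by_cases h₂ : j ≤ 2 * rm m + 1
  · rw [anchor_of_lt_of_le (by omega) h₂,
      neg_one_pow_eq_of_mod_two_eq (b := m + (2 * rm m + 1 - j)) (by omega)]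
    exact h.sign_phip _ (by omega)
  · obtain ⟨n, rfl⟩ := Nat.exists_eq_add_of_le' hm
    have h₆ := h.sign_eval (i := 0) (t := -6) (Nat.zero_le _) (by simp)
      (fun _ => by linarith [h.nonneg (k := 1) (by omega)])
    rw [anchor_of_lt (by omega), eval_Pm_six,
      neg_one_pow_eq_of_mod_two_eq (b := n + 2 + 0 + 1) (by omega), pow_succ]
    linarith

/-- `f` maps each gap between consecutive anchors into a gap between consecutive roots of `P_m`;
on the last gap `(5, 6)` it lands below `λ₁` and the sign flip comes from `5 - μ < 0`. -/
theorem sign_eval_f {j : ℕ} (hj : j < 2 * rm m + 2) {μ : ℝ} (h₁ : anchor (rm m) lam j < μ)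
    (h₂ : μ < anchor (rm m) lam (j + 1)) : 0 < (-1) ^ (m + j) * ((5 - μ) * (Pm m).eval (f μ)) := by
  have between : ∀ i ≤ rm m, (0 < i → lam i < f μ) → (i < rm m → f μ < lam (i + 1)) →
      μ < 5 → i % 2 = j % 2 → 0 < (-1) ^ (m + j) * ((5 - μ) * (Pm m).eval (f μ)) := by
    intro i hi hlo hhi h5 hij
    rw [neg_one_pow_eq_of_mod_two_eq (b := m + i) (by omega), mul_left_comm]
    exact mul_pos (by linarith) (h.sign_eval hi hlo hhi)
  rcases lt_trichotomy j (rm m) with hjr | rfl | hjr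
  · rw [anchor_of_le hjr.le] at h₁
    rw [anchor_of_le hjr] at h₂
    have hμ := h₂.le.trans phim_le
    exact between j hjr.le (fun _ => lt_f_of_phim_lt h₁ hμ (h.le_25_div_4 hjr.le))
      (fun _ => f_lt_of_lt_phim h₂ (h.le_25_div_4 hjr)) (by linarith) rfl
  · rw [anchor_of_le le_rfl] at h₁
    rw [anchor_of_lt_of_le (Nat.lt_succ_self _) (by omega),
      show 2 * rm m + 1 - (rm m + 1) = rm m by omega] at h₂
    exact between (rm m) le_rfl
      (fun _ => lt_f_of_phim_lt_of_lt_phip h₁ h₂ (h.le_25_div_4 le_rfl))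
      (fun h => absurd h (lt_irrefl _))
      (h₂.trans_le (phip_le_five (h.nonneg le_rfl))) rfl
  · by_cases hj' : j + 1 ≤ 2 * rm m + 1
    · rw [anchor_of_lt_of_le hjr (by omega),
        show 2 * rm m + 1 - j = 2 * rm m - j + 1 by omega] at h₁
      rw [anchor_of_lt_of_le (by omega) hj',
        show 2 * rm m + 1 - (j + 1) = 2 * rm m - j by omega] at h₂
      have hμ := le_phip.trans h₁.le
      exact between (2 * rm m - j) (by omega)
        (fun _ => lt_f_of_lt_phip h₂ hμ (h.le_25_div_4 (by omega)))
        (fun _ => f_lt_of_phip_lt h₁ (h.le_25_div_4 (by omega)))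
        (h₂.trans_le (phip_le_five (h.nonneg (by omega)))) (by omega)
    · rw [anchor_of_lt_of_le hjr (by omega), show 2 * rm m + 1 - j = 0 by omega, h.zero] at h₁
      have hf : f μ < 0 := f_lt_of_phip_lt h₁ (by norm_num)
      have hneg := h.sign_eval (i := 0) (t := f μ) (Nat.zero_le _) (by simp)
        (fun _ => hf.trans_le (h.zero ▸ h.le_of_le (Nat.zero_le 1) (by omega)))
      rw [phip_zero] at h₁
      rw [neg_one_pow_eq_of_mod_two_eq (b := m + 0 + 1) (by omega), pow_succ,
        show ∀ s e : ℝ, s * -1 * ((5 - μ) * e) = (μ - 5) * (s * e) by intros; ring]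
      exact mul_pos (sub_pos.mpr h₁) hneg

end RootData

theorem sign_phim_phip_of_identity {m R : ℕ} (hm : 2 ≤ m) {μ : ℕ → ℝ} (hμ : μ 0 = 0)
    (hid : ∀ j < R, ∃ W, 0 ≤ μ (j + 1) ∧ μ (j + 1) < 6 ∧
      (∀ x, F.eval x = μ (j + 1) →
        (Pm (m + 1)).eval x * (x - 2) = -2 * (5 - μ (j + 1)) * (x - 6) * W) ∧
      0 < (-1) ^ (m + j + 1) * ((5 - μ (j + 1)) * W)) :
    ∀ k ≤ R, 0 < (-1) ^ (m + k + 1) * (Pm (m + 1)).eval (phim (μ k)) ∧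
      0 < (-1) ^ (m + k) * (Pm (m + 1)).eval (phip (μ k)) := by
  rintro (_ | j) hj
  · rw [hμ]; exact sign_phim_phip_zero hm
  · obtain ⟨W, h₀, h₆, hx, hW⟩ := hid j (by omega)
    simpa only [← add_assoc] using sign_eval_phim_phip h₀ h₆ hx hW

theorem RootData.exists_two : ∃ lam, RootData 2 lam := by
  let a : ℕ → ℝ := fun | 0 => 0 | 1 => 2 | 2 => 5 | _ => 6
  obtain ⟨μ, hμ₀, hmono, hμ⟩ :=
    exists_interlacing_zeros (Pm 2).continuous (a := a) (n := 3) (e := 2)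
    (by intro j hj; interval_cases j <;> norm_num [a])
    (by intro j hj; interval_cases j <;> norm_num [a, Pm, Sp])
  have hr : rm 2 = 3 := rfl
  obtain ⟨⟨h₁, h₂, hr₁⟩, ⟨h₃, h₄, hr₂⟩, ⟨h₅, h₆, hr₃⟩⟩ := And.intro (hμ 0 (by norm_num))
    (And.intro (hμ 1 (by norm_num)) (hμ 2 (by norm_num)))
  simp only [a, zero_add, Nat.reduceAdd] at h₁ h₂ h₃ h₄ h₅ h₆
  have signs := sign_phim_phip_of_identity (m := 2) (R := 3) le_rfl hμ₀ fun j hj =>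
    ⟨μ (j + 1) - 2, by interval_cases j <;> linarith, by interval_cases j <;> linarith,
      fun x hx => Pm_three_eval_mul hx (hμ j hj).2.2,
      by interval_cases j <;> norm_num <;> nlinarith⟩
  exact ⟨μ, hμ₀, hmono, h₄, h₅, h₆,
    Pm_eq_prod le_rfl (hmono.mono (Set.Icc_subset_Icc_left zero_le_one)) (by
      intro k hk
      have := Finset.mem_Icc.mp hk
      obtain ⟨j, rfl⟩ : ∃ j, k = j + 1 := ⟨k - 1, by omega⟩
      exact (hμ j (by omega)).2.2),
    fun k hk => (signs k hk).1, fun k hk => (signs k hk).2⟩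

theorem RootData.exists_succ {m : ℕ} (hm : 2 ≤ m) {lam : ℕ → ℝ} (h : RootData m lam) :
    ∃ μ, RootData (m + 1) μ := by
  obtain ⟨μ, hμ₀, hmono, hμ⟩ := exists_interlacing_zeros (Pm (m + 1)).continuous
    (a := anchor (rm m) lam) (n := 2 * rm m + 2) (e := m + 1) (fun j hj => h.anchor_lt_succ hj)
    (fun j hj => h.sign_anchor hm hj)
  obtain ⟨n, rfl⟩ := Nat.exists_eq_add_of_le' hm
  have hR : rm (n + 2 + 1) = 2 * rm (n + 2) + 2 := rm_add_three n
  have hμ₀' : μ 0 = 0 := by rw [hμ₀, anchor_of_le (Nat.zero_le _), h.zero, phim_zero]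
  have h₅ : anchor (rm (n + 2)) lam (2 * rm (n + 2) + 1) = 5 := by
    rw [anchor_of_lt_of_le (by omega) le_rfl, Nat.sub_self, h.zero, phip_zero]
  have h₆ : anchor (rm (n + 2)) lam (2 * rm (n + 2) + 2) = 6 := anchor_of_lt (by omega)
  have hpen := hμ (2 * rm (n + 2)) (by omega)
  have hlast := hμ (2 * rm (n + 2) + 1) (by omega)
  rw [h₅] at hpen
  rw [h₅, h₆] at hlast
  have hbound : ∀ j < 2 * rm (n + 2) + 2, 0 ≤ μ (j + 1) ∧ μ (j + 1) < 6 := fun j hj =>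
    ⟨hμ₀' ▸ (hmono ⟨le_rfl, Nat.zero_le _⟩ ⟨Nat.zero_le _, hj⟩ (Nat.succ_pos j)).le,
      (hmono.monotoneOn ⟨Nat.zero_le _, hj⟩ ⟨Nat.zero_le _, le_rfl⟩ (by omega)).trans_lt hlast.2.1⟩
  have signs := sign_phim_phip_of_identity (m := n + 3) (R := 2 * rm (n + 2) + 2) (by omega) hμ₀'
    fun j hj => ⟨_, (hbound j hj).1, (hbound j hj).2,
      fun x hx => Pm_add_four_eval_mul hx (hμ j hj).2.2,
      by rw [neg_one_pow_eq_of_mod_two_eq (b := n + 2 + j) (by omega)]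
         exact h.sign_eval_f hj (hμ j hj).1 (hμ j hj).2.1⟩
  rw [← hR] at hmono signs
  refine ⟨μ, hμ₀', hmono, ?_, ?_, ?_, Pm_eq_prod (by omega)
    (hmono.mono (Set.Icc_subset_Icc_left zero_le_one)) ?_, fun k hk => (signs k hk).1,
    fun k hk => (signs k hk).2⟩
  · rw [hR]; exact hpen.2.1
  · rw [hR]; exact hlast.1
  · rw [hR]; exact hlast.2.1
  · intro k hk
    have := Finset.mem_Icc.mp hk
    obtain ⟨j, rfl⟩ : ∃ j, k = j + 1 := ⟨k - 1, by omega⟩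
    exact (hμ j (by omega)).2.2

theorem RootData.exists {m : ℕ} (hm : 2 ≤ m) : ∃ lam, RootData m lam := by
  induction m, hm using Nat.le_induction with
  | base => exact RootData.exists_two
  | succ m hm ih =>
    obtain ⟨lam, h⟩ := ih
    exact h.exists_succ hm

theorem statement_5 (m : ℕ) (hm : 2 ≤ m) (P P' : ℝ[X])
    (hP : P * Dp m = Qp m) (hP' : P' * Dp (m + 1) = Qp (m + 1)) :
    ∃ lam : ℕ → ℝ,
      StrictMonoOn lam (Set.Icc 1 (rm m)) ∧
      (∀ x : ℝ, P.eval x = 0 ↔ ∃ k : ℕ, 1 ≤ k ∧ k ≤ rm m ∧ lam k = x) ∧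
      0 < lam 1 ∧ lam (rm m - 1) < 5 ∧ 5 < lam (rm m) ∧ lam (rm m) < 6 ∧
      ∀ k : ℕ, 1 ≤ k → k ≤ rm m →
        0 < (-1 : ℝ) ^ (m + k - 1) * P'.eval (phim (lam k)) ∧
        0 < (-1 : ℝ) ^ (m + k) * P'.eval (phip (lam k)) := by
  obtain ⟨n, rfl⟩ := Nat.exists_eq_add_of_le' hm
  obtain rfl : P = Pm (n + 2) := mul_right_cancel₀ (Dp_ne_zero _) (hP.trans (Pm_mul_Dp n).symm)
  obtain rfl : P' = Pm (n + 3) :=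
    mul_right_cancel₀ (Dp_ne_zero _) (hP'.trans (Pm_mul_Dp (n + 1)).symm)
  obtain ⟨lam, h⟩ := RootData.exists hm
  have hr : 1 ≤ rm (n + 2) := by
    have := Nat.one_le_two_pow (n := n)
    simp only [rm, Nat.add_sub_cancel, pow_succ]; omega
  refine ⟨lam, h.strictMonoOn.mono (Set.Icc_subset_Icc_left zero_le_one),
    fun x => h.eval_eq_zero_iff,
    h.zero ▸ h.lt_of_lt zero_lt_one hr, h.penultimate_lt_five,
    h.five_lt_last, h.last_lt_six, fun k hk hkr => ⟨?_, h.sign_phip k hkr⟩⟩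
  rw [neg_one_pow_eq_of_mod_two_eq (b := n + 2 + k + 1) (by omega)]
  exact h.sign_phim k hkr
end
end
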